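/- Fix n, d ≥ 1, D ∈ ℝ^{n×d}, ρ > 0, weights σ_i ≥ 0 and a convex, monotonically increasing, nonnegative loss l : ℝ → ℝ defining Ω(z) = Σ_{i=1}^n σ_i l(z_{[i]}), and a proper, lower semicontinuous, c-weakly convex, nonnegative regularizer g : ℝ^d → ℝ ∪ {+∞}, with r > c. Define L_ρ(w, z; λ) = Ω(z) + ⟨λ, z − Dw⟩ + (ρ/2)‖z − Dw‖² + g(w). Suppose sequences (w^k, z^k, λ^k), k ≥ 1, satisfy for all k: (a) L_ρ(w^k, z^k; λ^k) ≥ L_ρ(w^k, z^{k+1}; λ^k); (b) w^{k+1} minimizes w ↦ (ρ/2)‖z^{k+1} − Dw + λ^k/ρ‖² + g(w) + (r/2)‖w − w^k‖²; (c) λ^{k+1} = λ^k + ρ(z^{k+1} − Dw^{k+1}); and (d) ‖λ^k‖ ≤ Λ for all k and Σ_{k=1}^{∞} ‖λ^{k+1} − λ^k‖² ≤ S < ∞. Set L̂ = L_ρ(w¹, z¹; λ¹) + Λ²/(2ρ) + 2S/ρ. Then for every integer K ≥ 1 there exists k with 1 ≤ k ≤ K such that: (i) ‖w^{k+1} − w^k‖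 ≤ √(2L̂/((2r−c)K)) and ‖λ^{k+1} − λ^k‖ ≤ √(ρL̂/K); (ii) consequently there exists a c-subgradient v of g at w^{k+1} with ‖D^⊤λ^{k+1} − v‖ ≤ r·√(2L̂/((2r−c)K)), and the vector ξ = −λ^k − ρ(z^{k+1} − Dw^k) satisfies ‖ξ + λ^{k+1}‖ ≤ ρ‖D‖·√(2L̂/((2r−c)K)); and (iii) ‖z^{k+1} − Dw^{k+1}‖ ≤ √(L̂/(ρK)). In particular, taking K = ⌈1/ε²⌉, all of these residuals are O(ε): the algorithm finds an ε-approximate KKT point within O(1/ε²) iterations. -/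

import Mathlib

/-!
The `w`-update is a proximal step for the `c`-weakly convex `g` with an `r`-strongly convex
proximal term, so its optimality condition yields a `c`-subgradient of `g` at `wᵏ⁺¹`; evaluating
that subgradient inequality at `wᵏ` shows that the step lowers `L_ρ` by
`(2r - c)/2 ‖wᵏ⁺¹ - wᵏ‖²`. The `z`-update does not raise `L_ρ`, and the dual update raises it by
`‖λᵏ⁺¹ - λᵏ‖²/ρ`. As `Ω, g ≥ 0` give `L_ρ ≥ -Λ²/(2ρ)`, telescoping bounds the sum over
`1 ≤ k ≤ K` of `(2r - c)/2 ‖wᵏ⁺¹ - wᵏ‖² + ‖λᵏ⁺¹ - λᵏ‖²/ρ` by `L̂`, so some summand is at most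
`L̂/K`, and every residual of the conclusion is controlled by these two increments.
-/

open scoped RealInnerProductSpace BigOperators

open Finset Filter Topology ContinuousLinearMap

theorem nonneg_of_forall_add_mul_nonneg {X C : ℝ}
    (h : ∀ t : ℝ, 0 < t → t ≤ 1 → 0 ≤ X + t * C) : 0 ≤ X := by
  have hlim : Tendsto (fun t : ℝ => X + t * C) (𝓝[>] 0) (𝓝 X) := by
    have : Continuous fun t : ℝ => X + t * C := by fun_prop
    simpa using (this.tendsto 0).mono_left nhdsWithin_le_nhds
  refine ge_of_tendsto hlim ?_
  filter_upwards [Ioc_mem_nhdsGT one_pos] with t ht using h t ht.1 ht.2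

theorem le_sqrt_div_of_mul_sq_le {x p B : ℝ} (hp : 0 < p) (h : p * x ^ 2 ≤ B) :
    x ≤ √(B / p) :=
  Real.le_sqrt_of_sq_le <| (le_div_iff₀ hp).2 (by linarith)

theorem sum_Icc_add_le_of_succ_add_le {V a b : ℕ → ℝ}
    (h : ∀ k, 1 ≤ k → V (k + 1) + a k ≤ V k + b k) (K : ℕ) :
    ∑ k ∈ Icc 1 K, a k + V (K + 1) ≤ V 1 + ∑ k ∈ Icc 1 K, b k := by
  induction K with
  | zero => simp
  | succ K ih =>
    rw [sum_Icc_succ_top (by omega), sum_Icc_succ_top (by omega)]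
    linarith [h (K + 1) (by omega)]

section WeakConvexity

variable {E : Type*} [NormedAddCommGroup E] [InnerProductSpace ℝ E]

def WeaklyConvex (c : ℝ) (g : E → ℝ) : Prop :=
  ConvexOn ℝ Set.univ fun w => g w + c / 2 * ‖w‖ ^ 2

def IsWeakSubgradient (c : ℝ) (g : E → ℝ) (x v : E) : Prop :=
  ∀ u, g u ≥ g x + ⟪v, u - x⟫ - c / 2 * ‖u - x‖ ^ 2

theorem norm_add_smul_sq (x y : E) (t : ℝ) :
    ‖x + t • y‖ ^ 2 = ‖x‖ ^ 2 + 2 * t * ⟪x, y⟫ + t ^ 2 * ‖y‖ ^ 2 := by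
  rw [norm_add_sq_real, real_inner_smul_right, norm_smul, Real.norm_eq_abs, mul_pow, sq_abs]
  ring

variable {c : ℝ} {g : E → ℝ}

theorem WeaklyConvex.apply_add_smul_sub_le (hg : WeaklyConvex c g) (x y : E) {t : ℝ}
    (ht₀ : 0 ≤ t) (ht₁ : t ≤ 1) :
    g (x + t • (y - x)) ≤ (1 - t) * g x + t * g y + c / 2 * t * (1 - t) * ‖y - x‖ ^ 2 := by
  have hcomb := hg.2 (Set.mem_univ x) (Set.mem_univ y) (sub_nonneg.2 ht₁) ht₀ (by ring)
  rw [show (1 - t) • x + t • y = x + t • (y - x) by module] at hcomb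
  have hnorm : ‖x + t • (y - x)‖ ^ 2
      = (1 - t) * ‖x‖ ^ 2 + t * ‖y‖ ^ 2 - t * (1 - t) * ‖y - x‖ ^ 2 := by
    rw [norm_add_smul_sq, norm_sub_sq_real, inner_sub_right, real_inner_self_eq_norm_sq,
      real_inner_comm]
    ring
  simp only [smul_eq_mul, hnorm] at hcomb
  linear_combination hcomb

theorem WeaklyConvex.isWeakSubgradient_of_forall_le (hg : WeaklyConvex c g) {x v : E}
    (h : ∀ u, ∃ Q, ∀ t : ℝ, 0 < t → t ≤ 1 →
      g x ≤ g (x + t • (u - x)) - t * ⟪v, u - x⟫ + t ^ 2 * Q) :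
    IsWeakSubgradient c g x v := by
  intro u
  obtain ⟨Q, hQ⟩ := h u
  suffices 0 ≤ g u - g x - ⟪v, u - x⟫ + c / 2 * ‖u - x‖ ^ 2 by linarith
  refine nonneg_of_forall_add_mul_nonneg (C := Q - c / 2 * ‖u - x‖ ^ 2) fun t ht₀ ht₁ => ?_
  refine nonneg_of_mul_nonneg_right ?_ ht₀
  linear_combination hQ t ht₀ ht₁ + hg.apply_add_smul_sub_le x u ht₀.le ht₁

variable {F : Type*} [NormedAddCommGroup F] [InnerProductSpace ℝ F]
  [CompleteSpace E] [CompleteSpace F]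

theorem prox_objective_add_smul (D : E →L[ℝ] F) (ρ r : ℝ) (a : F) (w₀ x h : E) (t : ℝ) :
    ρ / 2 * ‖a - D (x + t • h)‖ ^ 2 + r / 2 * ‖x + t • h - w₀‖ ^ 2
      = ρ / 2 * ‖a - D x‖ ^ 2 + r / 2 * ‖x - w₀‖ ^ 2
        - t * ⟪ρ • adjoint D (a - D x) - r • (x - w₀), h⟫
        + t ^ 2 * (ρ / 2 * ‖D h‖ ^ 2 + r / 2 * ‖h‖ ^ 2) := by
  rw [show a - D (x + t • h) = (a - D x) + (-t) • D h by rw [map_add, map_smul]; module,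
    show x + t • h - w₀ = (x - w₀) + t • h by module, norm_add_smul_sq, norm_add_smul_sq,
    inner_sub_left (ρ • _), real_inner_smul_left, real_inner_smul_left,
    ContinuousLinearMap.adjoint_inner_left]
  ring

variable {D : E →L[ℝ] F} {ρ r : ℝ} {a : F} {w₀ x : E}

theorem WeaklyConvex.isWeakSubgradient_of_isMinOn_prox (hg : WeaklyConvex c g)
    (hx : IsMinOn (fun u => ρ / 2 * ‖a - D u‖ ^ 2 + g u + r / 2 * ‖u - w₀‖ ^ 2) Set.univ x) :
    IsWeakSubgradient c g x (ρ • adjoint D (a - D x) - r • (x - w₀)) := by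
  refine hg.isWeakSubgradient_of_forall_le fun u =>
    ⟨ρ / 2 * ‖D (u - x)‖ ^ 2 + r / 2 * ‖u - x‖ ^ 2, fun t _ _ => ?_⟩
  have hmin := isMinOn_univ_iff.1 hx (x + t • (u - x))
  have hexp := prox_objective_add_smul D ρ r a w₀ x (u - x) t
  linarith

theorem WeaklyConvex.prox_descent (hg : WeaklyConvex c g) (hρ : 0 ≤ ρ)
    (hx : IsMinOn (fun u => ρ / 2 * ‖a - D u‖ ^ 2 + g u + r / 2 * ‖u - w₀‖ ^ 2) Set.univ x) :
    ρ / 2 * ‖a - D x‖ ^ 2 + g x + (2 * r - c) / 2 * ‖x - w₀‖ ^ 2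
      ≤ ρ / 2 * ‖a - D w₀‖ ^ 2 + g w₀ := by
  have hsub := hg.isWeakSubgradient_of_isMinOn_prox hx w₀
  have hexp := prox_objective_add_smul D ρ r a w₀ x (w₀ - x) 1
  rw [one_smul, add_sub_cancel, sub_self, norm_zero] at hexp
  rw [norm_sub_rev w₀ x] at hsub hexp
  nlinarith [sq_nonneg ‖D (w₀ - x)‖]

end WeakConvexity

section AugmentedLagrangian

variable {E F : Type*} [NormedAddCommGroup E] [InnerProductSpace ℝ E]
  [NormedAddCommGroup F] [InnerProductSpace ℝ F]
  {Ω : F → ℝ} {g : E → ℝ} {D : E →L[ℝ] F} {ρ : ℝ} {w w' : E} {z z' lam lam' : F}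

noncomputable def augLagrangian (Ω : F → ℝ) (g : E → ℝ) (D : E →L[ℝ] F) (ρ : ℝ) (w : E)
    (z lam : F) : ℝ :=
  Ω z + ⟪lam, z - D w⟫ + ρ / 2 * ‖z - D w‖ ^ 2 + g w

/-- Completing the square turns `L_ρ(·, z; λ)` into the objective of the `w`-update, up to terms
not depending on `w`. -/
theorem augLagrangian_eq_prox (hρ : ρ ≠ 0) :
    augLagrangian Ω g D ρ w z lam
      = Ω z + (ρ / 2 * ‖z + ρ⁻¹ • lam - D w‖ ^ 2 + g w) - ‖lam‖ ^ 2 / (2 * ρ) := by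
  rw [augLagrangian, show z + ρ⁻¹ • lam - D w = (z - D w) + ρ⁻¹ • lam by abel,
    norm_add_smul_sq, real_inner_comm]
  field_simp
  ring

theorem neg_sq_div_le_augLagrangian {Λ : ℝ} (hρ : 0 < ρ) (hΩ : 0 ≤ Ω z) (hg : 0 ≤ g w)
    (hlam : ‖lam‖ ≤ Λ) : -(Λ ^ 2 / (2 * ρ)) ≤ augLagrangian Ω g D ρ w z lam := by
  have hsq : ‖lam‖ ^ 2 / (2 * ρ) ≤ Λ ^ 2 / (2 * ρ) := by gcongr
  rw [augLagrangian_eq_prox hρ.ne']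
  nlinarith [sq_nonneg ‖z + ρ⁻¹ • lam - D w‖]

theorem augLagrangian_dual_step (hlam' : lam' = lam + ρ • (z - D w)) :
    augLagrangian Ω g D ρ w z lam' = augLagrangian Ω g D ρ w z lam + ρ * ‖z - D w‖ ^ 2 := by
  rw [augLagrangian, augLagrangian, hlam', inner_add_left, real_inner_smul_left,
    real_inner_self_eq_norm_sq]
  ring

theorem inv_mul_norm_sub_sq_of_dual_step (hρ : ρ ≠ 0) (hlam' : lam' = lam + ρ • (z - D w)) :
    ρ⁻¹ * ‖lam' - lam‖ ^ 2 = ρ * ‖z - D w‖ ^ 2 := by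
  rw [hlam', add_sub_cancel_left, norm_smul, Real.norm_eq_abs, mul_pow, sq_abs, sq ρ,
    mul_assoc ρ, inv_mul_cancel_left₀ hρ]

theorem norm_z_stationarity_residual_le (hρ : 0 ≤ ρ) (hlam' : lam' = lam + ρ • (z' - D w')) :
    ‖-lam - ρ • (z' - D w) + lam'‖ ≤ ρ * ‖D‖ * ‖w' - w‖ := by
  have hres : -lam - ρ • (z' - D w) + lam' = ρ • D (w - w') := by
    rw [hlam', map_sub]
    module
  rw [hres, norm_smul, Real.norm_of_nonneg hρ, mul_assoc, norm_sub_rev w']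
  gcongr
  exact D.le_opNorm _

variable [CompleteSpace E] [CompleteSpace F] {c r : ℝ}

theorem augLagrangian_prox_step_le (hg : WeaklyConvex c g) (hρ : 0 < ρ)
    (hw' : IsMinOn (fun u => ρ / 2 * ‖z + ρ⁻¹ • lam - D u‖ ^ 2 + g u + r / 2 * ‖u - w‖ ^ 2)
      Set.univ w') :
    augLagrangian Ω g D ρ w' z lam + (2 * r - c) / 2 * ‖w' - w‖ ^ 2
      ≤ augLagrangian Ω g D ρ w z lam := by
  rw [augLagrangian_eq_prox hρ.ne', augLagrangian_eq_prox hρ.ne']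
  linarith [hg.prox_descent hρ.le hw']

theorem augLagrangian_admm_step_le (hg : WeaklyConvex c g) (hρ : 0 < ρ)
    (hz' : augLagrangian Ω g D ρ w z' lam ≤ augLagrangian Ω g D ρ w z lam)
    (hw' : IsMinOn (fun u => ρ / 2 * ‖z' + ρ⁻¹ • lam - D u‖ ^ 2 + g u + r / 2 * ‖u - w‖ ^ 2)
      Set.univ w')
    (hlam' : lam' = lam + ρ • (z' - D w')) :
    augLagrangian Ω g D ρ w' z' lam' + (2 * r - c) / 2 * ‖w' - w‖ ^ 2
      ≤ augLagrangian Ω g D ρ w z lam + ρ⁻¹ * ‖lam' - lam‖ ^ 2 := by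
  rw [augLagrangian_dual_step hlam', inv_mul_norm_sub_sq_of_dual_step hρ.ne' hlam']
  linarith [augLagrangian_prox_step_le (Ω := Ω) hg hρ hw']

theorem WeaklyConvex.isWeakSubgradient_of_admm_step (hg : WeaklyConvex c g) (hρ : ρ ≠ 0)
    (hw' : IsMinOn (fun u => ρ / 2 * ‖z' + ρ⁻¹ • lam - D u‖ ^ 2 + g u + r / 2 * ‖u - w‖ ^ 2)
      Set.univ w')
    (hlam' : lam' = lam + ρ • (z' - D w')) :
    IsWeakSubgradient c g w' (adjoint D lam' - r • (w' - w)) := by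
  have hdual : ρ • (z' + ρ⁻¹ • lam - D w') = lam' := by
    rw [hlam', smul_sub, smul_add, smul_inv_smul₀ hρ, smul_sub]
    abel
  have hsub := hg.isWeakSubgradient_of_isMinOn_prox hw'
  rwa [← map_smul, hdual] at hsub

theorem exists_admm_progress_le (hg : WeaklyConvex c g) (hρ : 0 < ρ) (hΩ : ∀ z, 0 ≤ Ω z)
    (hg₀ : ∀ w, 0 ≤ g w) {w : ℕ → E} {z lam : ℕ → F} {Λ S : ℝ}
    (hz : ∀ k, 1 ≤ k → augLagrangian Ω g D ρ (w k) (z (k + 1)) (lam k)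
      ≤ augLagrangian Ω g D ρ (w k) (z k) (lam k))
    (hw : ∀ k, 1 ≤ k → IsMinOn (fun u => ρ / 2 * ‖z (k + 1) + ρ⁻¹ • lam k - D u‖ ^ 2 + g u
      + r / 2 * ‖u - w k‖ ^ 2) Set.univ (w (k + 1)))
    (hlam : ∀ k, 1 ≤ k → lam (k + 1) = lam k + ρ • (z (k + 1) - D (w (k + 1))))
    (hΛ : ∀ k, ‖lam k‖ ≤ Λ) (hS : ∀ K, ∑ k ∈ Icc 1 K, ‖lam (k + 1) - lam k‖ ^ 2 ≤ S)
    {K : ℕ} (hK : 1 ≤ K) :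
    ∃ k ∈ Icc 1 K, (2 * r - c) / 2 * ‖w (k + 1) - w k‖ ^ 2 + ρ⁻¹ * ‖lam (k + 1) - lam k‖ ^ 2
      ≤ (augLagrangian Ω g D ρ (w 1) (z 1) (lam 1) + Λ ^ 2 / (2 * ρ) + 2 * S / ρ) / K := by
  refine exists_le_of_sum_le (nonempty_Icc.2 hK) ?_
  rw [sum_const, Nat.card_Icc, Nat.add_sub_cancel, nsmul_eq_mul,
    mul_div_cancel₀ _ (by positivity)]
  have htel := sum_Icc_add_le_of_succ_add_le
    (V := fun k => augLagrangian Ω g D ρ (w k) (z k) (lam k))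
    (a := fun k => (2 * r - c) / 2 * ‖w (k + 1) - w k‖ ^ 2 + ρ⁻¹ * ‖lam (k + 1) - lam k‖ ^ 2)
    (b := fun k => 2 * ρ⁻¹ * ‖lam (k + 1) - lam k‖ ^ 2)
    (fun k hk => by linarith [augLagrangian_admm_step_le hg hρ (hz k hk) (hw k hk) (hlam k hk)]) K
  have hS' : 2 * ρ⁻¹ * ∑ k ∈ Icc 1 K, ‖lam (k + 1) - lam k‖ ^ 2 ≤ 2 * S / ρ := by
    rw [mul_comm 2 ρ⁻¹, mul_assoc, div_eq_inv_mul]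
    exact mul_le_mul_of_nonneg_left (by linarith [hS K]) (by positivity)
  rw [← mul_sum] at htel
  linarith [neg_sq_div_le_augLagrangian (D := D) hρ (hΩ (z (K + 1))) (hg₀ (w (K + 1))) (hΛ (K + 1))]

end AugmentedLagrangian

theorem admm_eps_kkt_general (n d : ℕ)
    (D : EuclideanSpace ℝ (Fin d) →L[ℝ] EuclideanSpace ℝ (Fin n))
    (ρ : ℝ) (hρ : 0 < ρ)
    (sw : Fin n → ℝ) (hsw : ∀ i, 0 ≤ sw i)
    (l : ℝ → ℝ)
    (hl_nonneg : ∀ t, 0 ≤ l t)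
    (Ω : EuclideanSpace ℝ (Fin n) → ℝ)
    (hΩ : ∀ z, Ω z = ∑ i : Fin n, sw i * l (z (Tuple.sort (fun j => z j) i)))
    (g : EuclideanSpace ℝ (Fin d) → ℝ)
    (hg_nonneg : ∀ w, 0 ≤ g w)
    (c : ℝ) (hc : 0 < c)
    (hg_wc : ConvexOn ℝ Set.univ (fun w => g w + c / 2 * ‖w‖ ^ 2))
    (r : ℝ) (hr : c < r)
    (L : EuclideanSpace ℝ (Fin d) → EuclideanSpace ℝ (Fin n) →
      EuclideanSpace ℝ (Fin n) → ℝ)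
    (hL : ∀ w z lam, L w z lam
      = Ω z + ⟪lam, z - D w⟫ + ρ / 2 * ‖z - D w‖ ^ 2 + g w)
    (w : ℕ → EuclideanSpace ℝ (Fin d))
    (z lam : ℕ → EuclideanSpace ℝ (Fin n))
    (ha : ∀ k, 1 ≤ k → L (w k) (z k) (lam k) ≥ L (w k) (z (k + 1)) (lam k))
    (hb : ∀ k, 1 ≤ k → ∀ u,
      ρ / 2 * ‖z (k + 1) - D (w (k + 1)) + ρ⁻¹ • lam k‖ ^ 2 + g (w (k + 1))
          + r / 2 * ‖w (k + 1) - w k‖ ^ 2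
        ≤ ρ / 2 * ‖z (k + 1) - D u + ρ⁻¹ • lam k‖ ^ 2 + g u
          + r / 2 * ‖u - w k‖ ^ 2)
    (hc' : ∀ k, 1 ≤ k →
      lam (k + 1) = lam k + ρ • (z (k + 1) - D (w (k + 1))))
    (Λ : ℝ) (hΛ : ∀ k, ‖lam k‖ ≤ Λ)
    (S : ℝ) (hS : ∀ K : ℕ, ∑ k ∈ Finset.Icc 1 K, ‖lam (k + 1) - lam k‖ ^ 2 ≤ S)
    (Lhat : ℝ)
    (hLhat : Lhat = L (w 1) (z 1) (lam 1) + Λ ^ 2 / (2 * ρ) + 2 * S / ρ) :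
    ∀ K : ℕ, 1 ≤ K → ∃ k, 1 ≤ k ∧ k ≤ K ∧
      ‖w (k + 1) - w k‖ ≤ Real.sqrt (2 * Lhat / ((2 * r - c) * K)) ∧
      ‖lam (k + 1) - lam k‖ ≤ Real.sqrt (ρ * Lhat / K) ∧
      (∃ v, (∀ u, g u ≥ g (w (k + 1)) + ⟪v, u - w (k + 1)⟫
          - c / 2 * ‖u - w (k + 1)‖ ^ 2) ∧
        ‖(ContinuousLinearMap.adjoint D) (lam (k + 1)) - v‖
          ≤ r * Real.sqrt (2 * Lhat / ((2 * r - c) * K))) ∧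
      ‖(-(lam k) - ρ • (z (k + 1) - D (w k))) + lam (k + 1)‖
        ≤ ρ * ‖D‖ * Real.sqrt (2 * Lhat / ((2 * r - c) * K)) ∧
      ‖z (k + 1) - D (w (k + 1))‖ ≤ Real.sqrt (Lhat / (ρ * K)) := by
  intro K hK
  obtain rfl : L = augLagrangian Ω g D ρ := funext fun w => funext fun z => funext (hL w z)
  have hΩ₀ (z) : 0 ≤ Ω z := by
    rw [hΩ]
    exact Finset.sum_nonneg fun i _ => mul_nonneg (hsw i) (hl_nonneg _)
  have hw (k) (hk : 1 ≤ k) : IsMinOn (fun u => ρ / 2 * ‖z (k + 1) + ρ⁻¹ • lam k - D u‖ ^ 2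
      + g u + r / 2 * ‖u - w k‖ ^ 2) Set.univ (w (k + 1)) :=
    isMinOn_univ_iff.2 fun u => by simpa only [sub_add_eq_add_sub] using hb k hk u
  obtain ⟨k, hk, hek⟩ := exists_admm_progress_le hg_wc hρ hΩ₀ hg_nonneg ha hw hc' hΛ hS hK
  rw [← hLhat] at hek
  rw [Finset.mem_Icc] at hk
  have hrc : 0 < 2 * r - c := by linarith
  have hΔw2 := le_of_add_le_of_nonneg_left hek (by positivity)
  have hΔlam2 := le_of_add_le_of_nonneg_right hek (by positivity)
  have hres2 : ρ * ‖z (k + 1) - D (w (k + 1))‖ ^ 2 ≤ Lhat / K := by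
    rwa [inv_mul_norm_sub_sq_of_dual_step hρ.ne' (hc' k hk.1)] at hΔlam2
  have hΔw : ‖w (k + 1) - w k‖ ≤ √(2 * Lhat / ((2 * r - c) * K)) := by
    convert le_sqrt_div_of_mul_sq_le (by positivity) hΔw2 using 2
    field_simp
  refine ⟨k, hk.1, hk.2, hΔw, ?_,
    ⟨_, WeaklyConvex.isWeakSubgradient_of_admm_step hg_wc hρ.ne' (hw k hk.1) (hc' k hk.1), ?_⟩,
    (norm_z_stationarity_residual_le hρ.le (hc' k hk.1)).trans (by gcongr), ?_⟩
  · convert le_sqrt_div_of_mul_sq_le (by positivity) hΔlam2 using 2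
    field_simp
  · rw [sub_sub_cancel, norm_smul, Real.norm_of_nonneg (by linarith)]
    exact mul_le_mul_of_nonneg_left hΔw (by linarith)
  · convert le_sqrt_div_of_mul_sq_le hρ hres2 using 2
    ring

/-- **Theorem 1: the proximal ADMM finds an ε-KKT point in `O(1/ε²)` iterations**
(stated with explicit bounds).  With `Ω(z) = ∑ᵢ σᵢ l(z₍ᵢ₎)` (sorted entries),
`g ≥ 0` proper, lsc and `c`-weakly convex, `r > c`, the augmented Lagrangian
`L_ρ(w,z;λ) = Ω(z) + ⟪λ, z - Dw⟫ + (ρ/2)‖z - Dw‖² + g(w)`, ADMM iterates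
satisfying (a) `z`-descent, (b) exact `w`-minimization, (c) the dual update, and
(d) `‖λᵏ‖ ≤ Λ` with `∑ₖ‖λᵏ⁺¹-λᵏ‖² ≤ S`, and
`L̂ = L_ρ(w¹,z¹;λ¹) + Λ²/(2ρ) + 2S/ρ`, for every `K ≥ 1` there is `1 ≤ k ≤ K` with
(i) `‖wᵏ⁺¹-wᵏ‖ ≤ √(2L̂/((2r-c)K))`, `‖λᵏ⁺¹-λᵏ‖ ≤ √(ρL̂/K)`;
(ii) a `c`-subgradient `v` of `g` at `wᵏ⁺¹` with
`‖D^⊤λᵏ⁺¹ - v‖ ≤ r√(2L̂/((2r-c)K))`, and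
`ξ = -λᵏ - ρ(zᵏ⁺¹ - Dwᵏ)` satisfies `‖ξ + λᵏ⁺¹‖ ≤ ρ‖D‖√(2L̂/((2r-c)K))`;
(iii) `‖zᵏ⁺¹ - Dwᵏ⁺¹‖ ≤ √(L̂/(ρK))`. -/
theorem admm_eps_kkt (n d : ℕ) (hn : 1 ≤ n) (hd : 1 ≤ d)
    (D : EuclideanSpace ℝ (Fin d) →L[ℝ] EuclideanSpace ℝ (Fin n))
    (ρ : ℝ) (hρ : 0 < ρ)
    (sw : Fin n → ℝ) (hsw : ∀ i, 0 ≤ sw i)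
    (l : ℝ → ℝ) (hl_conv : ConvexOn ℝ Set.univ l) (hl_mono : Monotone l)
    (hl_nonneg : ∀ t, 0 ≤ l t)
    (Ω : EuclideanSpace ℝ (Fin n) → ℝ)
    (hΩ : ∀ z, Ω z = ∑ i : Fin n, sw i * l (z (Tuple.sort (fun j => z j) i)))
    (g : EuclideanSpace ℝ (Fin d) → ℝ)
    (hg_lsc : LowerSemicontinuous g)
    (hg_nonneg : ∀ w, 0 ≤ g w)
    (c : ℝ) (hc : 0 < c)
    (hg_wc : ConvexOn ℝ Set.univ (fun w => g w + c / 2 * ‖w‖ ^ 2))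
    (r : ℝ) (hr : c < r)
    (L : EuclideanSpace ℝ (Fin d) → EuclideanSpace ℝ (Fin n) →
      EuclideanSpace ℝ (Fin n) → ℝ)
    (hL : ∀ w z lam, L w z lam
      = Ω z + ⟪lam, z - D w⟫ + ρ / 2 * ‖z - D w‖ ^ 2 + g w)
    (w : ℕ → EuclideanSpace ℝ (Fin d))
    (z lam : ℕ → EuclideanSpace ℝ (Fin n))
    (ha : ∀ k, 1 ≤ k → L (w k) (z k) (lam k) ≥ L (w k) (z (k + 1)) (lam k))
    (hb : ∀ k, 1 ≤ k → ∀ u,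
      ρ / 2 * ‖z (k + 1) - D (w (k + 1)) + ρ⁻¹ • lam k‖ ^ 2 + g (w (k + 1))
          + r / 2 * ‖w (k + 1) - w k‖ ^ 2
        ≤ ρ / 2 * ‖z (k + 1) - D u + ρ⁻¹ • lam k‖ ^ 2 + g u
          + r / 2 * ‖u - w k‖ ^ 2)
    (hc' : ∀ k, 1 ≤ k →
      lam (k + 1) = lam k + ρ • (z (k + 1) - D (w (k + 1))))
    (Λ : ℝ) (hΛ : ∀ k, ‖lam k‖ ≤ Λ)
    (S : ℝ) (hS : ∀ K : ℕ, ∑ k ∈ Finset.Icc 1 K, ‖lam (k + 1) - lam k‖ ^ 2 ≤ S)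
    (Lhat : ℝ)
    (hLhat : Lhat = L (w 1) (z 1) (lam 1) + Λ ^ 2 / (2 * ρ) + 2 * S / ρ) :
    ∀ K : ℕ, 1 ≤ K → ∃ k, 1 ≤ k ∧ k ≤ K ∧
      ‖w (k + 1) - w k‖ ≤ Real.sqrt (2 * Lhat / ((2 * r - c) * K)) ∧
      ‖lam (k + 1) - lam k‖ ≤ Real.sqrt (ρ * Lhat / K) ∧
      (∃ v, (∀ u, g u ≥ g (w (k + 1)) + ⟪v, u - w (k + 1)⟫
          - c / 2 * ‖u - w (k + 1)‖ ^ 2) ∧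
        ‖(ContinuousLinearMap.adjoint D) (lam (k + 1)) - v‖
          ≤ r * Real.sqrt (2 * Lhat / ((2 * r - c) * K))) ∧
      ‖(-(lam k) - ρ • (z (k + 1) - D (w k))) + lam (k + 1)‖
        ≤ ρ * ‖D‖ * Real.sqrt (2 * Lhat / ((2 * r - c) * K)) ∧
      ‖z (k + 1) - D (w (k + 1))‖ ≤ Real.sqrt (Lhat / (ρ * K)) :=
  admm_eps_kkt_general n d D ρ hρ sw hsw l hl_nonneg Ω hΩ g hg_nonneg c hc hg_wc r hr L hL w z lam
    ha hb hc' Λ hΛ S hS Lhat hLhat
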